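/- Let f ∈ A depend only on the single variable u, and let α, β, γ, δ, ε ∈ ℂ. Then the master-formula λ-bracket with generator coefficients P_{(2,0)} = α·f·S₁²(f), P_{(1,1)} = β·f·S₁S₂(f), P_{(0,2)} = γ·f·S₂²(f), P_{(1,0)} = δ·f·S₁(f), P_{(0,1)} = ε·f·S₂(f), together with P_{−L} = −S^{−L}(P_L) for L ∈ {(2,0),(1,1),(0,2),(1,0),(0,1)} and P_T = 0 otherwise — corresponding to the difference operator P = f(u)(α S₁² + β S₁S₂ + γ S₂² + δ S₁ + ε S₂ − α S₁^{−2} − β S₁^{−1}S₂^{−1} − γ S₂^{−2} − δ S₁^{−1} − ε S₂^{−1})∘f(u) — is skewsymmetric and satisfies the PVA-Jacobi identity for all triples of elements of A; i.e. P is a Hamiltonian difference operator. -/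

import Mathlib

/-
The derivations `d_N = S^N(f) ∂/∂u_N` commute pairwise, because `f` depends on `u` alone, and
satisfy `S^T ∘ d_M = d_{M+T} ∘ S^T`. In terms of them the master formula for
`P = f ∘ (Σ_K c_K S^K) ∘ f` becomes the constant-coefficient bracket
`B_T(p, q) = Σ_{M,N} c_{T-N+M} d_N q · S^T d_M p`, and the five parameters only enter through
the skew coefficients `c_K = -c_{-K}`. Skewsymmetry is the exchange `M ↔ N`. For Jacobi, the
Leibniz rule and sesquilinearity expand the three double brackets into double sums over the
finite supports of `d_• p`, `d_• q`, `d_• r`; after exchanging the order of summation the terms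
match in pairs, one pair through skewsymmetry.
-/

open MvPolynomial

namespace MPVA

/-- The algebra of difference polynomials in `ℓ` generators on a `D`-dimensional lattice:
polynomials over `ℂ` in the variables `u^i_N`, `i ∈ Fin ℓ`, `N ∈ ℤ^D`. -/
abbrev A (ℓ D : ℕ) := MvPolynomial (Fin ℓ × (Fin D → ℤ)) ℂ

variable {ℓ D : ℕ}

/-- The shift automorphism `S^M` sending `u^i_N` to `u^i_{N+M}`. -/
noncomputable def Sh (M : Fin D → ℤ) : A ℓ D ≃ₐ[ℂ] A ℓ D :=
  renameEquiv ℂ ((Equiv.refl (Fin ℓ)).prodCongr (Equiv.addRight M))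

/-- The `α`-th standard basis vector `E_α ∈ ℤ^D`. -/
def E (α : Fin D) : Fin D → ℤ := fun β => if β = α then 1 else 0

/-- Coefficient `B_T(f,g)` of `λ^T` in the master-formula λ-bracket `{f_λ g}` determined
by the generator coefficients `{u^i_λ u^j} = Σ_T (P j i T)·λ^T`:
`{f_λ g} = Σ_{i,j,M,N,T'} (∂g/∂u^j_N)·S^N(P^{ji}_{T'})·S^{N+T'−M}(∂f/∂u^i_M)·λ^{N+T'−M}`. -/
noncomputable def B (P : Fin ℓ → Fin ℓ → (Fin D → ℤ) → A ℓ D)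
    (T : Fin D → ℤ) (f g : A ℓ D) : A ℓ D :=
  ∑ᶠ (i : Fin ℓ) (j : Fin ℓ) (M : Fin D → ℤ) (N : Fin D → ℤ),
    (pderiv (j, N) g) * (Sh N (P j i (T - N + M))) * (Sh T (pderiv (i, M) f))

/-- The family of generator coefficients has only finitely many nonzero members. -/
def FinSupp (P : Fin ℓ → Fin ℓ → (Fin D → ℤ) → A ℓ D) : Prop :=
  {x : (Fin ℓ × Fin ℓ) × (Fin D → ℤ) | P x.1.1 x.1.2 x.2 ≠ 0}.Finite

/-- The PVA-Jacobi identity for the triple `(f,g,h)`, written coefficient-wise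
(for all `T, U ∈ ℤ^D`, the coefficient of `λ^T μ^U` in
`Σ_U {f_λ B_U(g,h)}μ^U − Σ_T {g_μ B_T(f,h)}λ^T = Σ_{T,U} B_U(B_T(f,g),h)λ^{T+U}μ^U`). -/
def Jacobi (P : Fin ℓ → Fin ℓ → (Fin D → ℤ) → A ℓ D) (f g h : A ℓ D) : Prop :=
  ∀ T U : Fin D → ℤ,
    B P T f (B P U g h) - B P U g (B P T f h) = B P U (B P (T - U) f g) h

/-- For `D = 2`: the lattice point `(m,n) ∈ ℤ²`. -/
def v (m n : ℤ) : Fin 2 → ℤ := ![m, n]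

/-- For `D = 2`, `ℓ = 1`: the variable `u_{mn}` of the scalar two-dimensional algebra. -/
noncomputable def uu (m n : ℤ) : A 1 2 := X ((0 : Fin 1), v m n)


open Function

/-- Abstracts `d N = S^N(f) ∂/∂u_N` on difference polynomials: the Hamiltonian property of
`f ∘ (Σ_K c_K S^K) ∘ f` only uses these laws. -/
structure LatticeFrame (k R ι : Type*) [CommRing k] [CommRing R] [Algebra k R]
    [AddCommGroup ι] where
  S : ι → R ≃ₐ[k] R
  d : ι → Derivation k R R
  S_S : ∀ T U x, S T (S U x) = S (U + T) x
  S_d : ∀ T M x, S T (d M x) = d (M + T) (S T x)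
  d_comm : ∀ M N x, d M (d N x) = d N (d M x)
  finite_support : ∀ x, (support fun N => d N x).Finite

namespace LatticeFrame

variable {k R ι : Type*} [CommRing k] [CommRing R] [Algebra k R] [AddCommGroup ι]
variable (F : LatticeFrame k R ι) (c : ι → k)

lemma S_zero (x : R) : F.S 0 x = x :=
  (F.S 0).injective (by rw [F.S_S, zero_add])

lemma S_neg_S (T : ι) (x : R) : F.S (-T) (F.S T x) = x := by
  rw [F.S_S, add_neg_cancel, S_zero]

noncomputable def supp (x : R) : Finset ι := (F.finite_support x).toFinset

lemma mem_supp {x : R} {N : ι} : N ∈ F.supp x ↔ F.d N x ≠ 0 := by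
  simp [supp]

lemma supp_add [DecidableEq ι] (x y : R) : F.supp (x + y) ⊆ F.supp x ∪ F.supp y := by
  intro N
  simp only [Finset.mem_union, mem_supp, map_add]
  contrapose!
  rintro ⟨hx, hy⟩
  rw [hx, hy, add_zero]

lemma supp_smul (a : k) (x : R) : F.supp (a • x) ⊆ F.supp x := by
  intro N
  simp only [mem_supp, Derivation.map_smul]
  contrapose!
  intro h
  rw [h, smul_zero]

lemma supp_mul [DecidableEq ι] (x y : R) : F.supp (x * y) ⊆ F.supp x ∪ F.supp y := by
  intro N
  simp only [Finset.mem_union, mem_supp, Derivation.leibniz]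
  contrapose!
  rintro ⟨hx, hy⟩
  rw [hx, hy, smul_zero, smul_zero, add_zero]

lemma supp_d (M : ι) (x : R) : F.supp (F.d M x) ⊆ F.supp x := by
  intro N
  simp only [mem_supp]
  contrapose!
  intro h
  rw [F.d_comm, h, map_zero]

/-- The master formula for `P = f ∘ (Σ_K c_K S^K) ∘ f`, with the factors `S^N f` and `S^{T+M} f`
of `S^N(P_{T-N+M})` absorbed into `d N` and `S^T ∘ d M`. -/
noncomputable def bracket (T : ι) (p q : R) : R :=
  ∑ᶠ (M : ι) (N : ι), c (T - N + M) • (F.d N q * F.S T (F.d M p))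

variable {F c}

lemma bracket_eq_sum {T : ι} {p q : R} {s t : Finset ι} (hs : F.supp p ⊆ s)
    (ht : F.supp q ⊆ t) :
    F.bracket c T p q = ∑ z ∈ s ×ˢ t, c (T - z.2 + z.1) • (F.d z.2 q * F.S T (F.d z.1 p)) := by
  rw [bracket, Finset.sum_product,
    finsum_eq_sum_of_support_subset (s := s) _ fun M hM => hs (F.mem_supp.2 fun h => hM ?_)]
  · refine Finset.sum_congr rfl fun M _ => finsum_eq_sum_of_support_subset _ fun N hN => ?_
    refine ht (F.mem_supp.2 fun h => hN ?_)
    simp [h]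
  · simp [h]

variable (F c) in
noncomputable def bracketRight (T : ι) (p : R) : R →ₗ[k] R where
  toFun := F.bracket c T p
  map_add' x y := by
    classical
    rw [bracket_eq_sum le_rfl (F.supp_add x y), bracket_eq_sum le_rfl Finset.subset_union_left,
      bracket_eq_sum le_rfl Finset.subset_union_right, ← Finset.sum_add_distrib]
    simp only [map_add, add_mul, smul_add]
  map_smul' a x := by
    rw [bracket_eq_sum le_rfl (F.supp_smul a x), bracket_eq_sum le_rfl le_rfl, Finset.smul_sum]
    simp only [Derivation.map_smul, smul_mul_assoc, RingHom.id_apply]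
    exact Finset.sum_congr rfl fun _ _ => smul_comm _ _ _

lemma bracketRight_apply (T : ι) (p q : R) : F.bracketRight c T p q = F.bracket c T p q := rfl

lemma bracket_mul_right (T : ι) (p x y : R) :
    F.bracket c T p (x * y) = F.bracket c T p x * y + x * F.bracket c T p y := by
  classical
  rw [bracket_eq_sum le_rfl (F.supp_mul x y), bracket_eq_sum le_rfl Finset.subset_union_left,
    bracket_eq_sum le_rfl Finset.subset_union_right, Finset.sum_mul, Finset.mul_sum,
    ← Finset.sum_add_distrib]
  refine Finset.sum_congr rfl fun z _ => ?_
  simp only [Derivation.leibniz, smul_eq_mul, Algebra.smul_def]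
  ring

lemma bracket_S_right (T U : ι) (p y : R) :
    F.bracket c T p (F.S U y) = F.S U (F.bracket c (T - U) p y) := by
  rw [bracket, bracket, AddEquivClass.map_finsum]
  refine finsum_congr fun M => ?_
  rw [AddEquivClass.map_finsum, ← finsum_comp_equiv (Equiv.addRight U)]
  refine finsum_congr fun N => ?_
  simp only [Equiv.coe_addRight, map_smul, map_mul, F.S_S, sub_add_cancel, ← F.S_d]
  rw [show T - (N + U) + M = T - U - N + M by abel]

lemma bracket_skew (hc : ∀ K, c (-K) = -c K) (T : ι) (p q : R) :
    F.bracket c (-T) q p = -F.S (-T) (F.bracket c T p q) := by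
  rw [bracket_eq_sum le_rfl le_rfl, bracket_eq_sum le_rfl le_rfl, map_sum,
    ← Finset.sum_neg_distrib]
  refine Finset.sum_nbij' Prod.swap Prod.swap (by simp [and_comm]) (by simp [and_comm])
    (by simp) (by simp) fun z _ => ?_
  simp only [Prod.fst_swap, Prod.snd_swap, map_smul, map_mul, S_neg_S,
    show -T - z.2 + z.1 = -(T - z.1 + z.2) by abel, hc, neg_smul, mul_comm]

lemma bracket_swap (hc : ∀ K, c (-K) = -c K) (T : ι) (x r : R) :
    F.bracket c T x r = -F.S T (F.bracket c (-T) r x) := by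
  simpa using F.bracket_skew hc (-T) r x

lemma bracket_bracket_right (T U : ι) (p q r : R) :
    F.bracket c T p (F.bracket c U q r) =
      ∑ w ∈ F.supp q ×ˢ F.supp r, c (U - w.2 + w.1) •
        (F.bracket c T p (F.d w.2 r) * F.S U (F.d w.1 q) +
          F.d w.2 r * F.S U (F.bracket c (T - U) p (F.d w.1 q))) := by
  rw [bracket_eq_sum (p := q) (q := r) le_rfl le_rfl, ← bracketRight_apply, map_sum]
  refine Finset.sum_congr rfl fun w _ => ?_
  rw [map_smul, bracketRight_apply, bracket_mul_right, bracket_S_right]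

lemma bracket_bracket_left (hc : ∀ K, c (-K) = -c K) (T U : ι) (p q r : R) :
    F.bracket c U (F.bracket c (T - U) p q) r =
      ∑ z ∈ F.supp p ×ˢ F.supp q, c (T - U - z.2 + z.1) •
        (F.bracket c U (F.d z.2 q) r * F.S T (F.d z.1 p) +
          F.S U (F.d z.2 q) * F.bracket c T (F.d z.1 p) r) := by
  rw [bracket_swap hc, bracket_bracket_right, map_sum, ← Finset.sum_neg_distrib]
  refine Finset.sum_congr rfl fun z _ => ?_
  rw [bracket_swap hc U, bracket_swap hc T, show -U - (T - U) = -T by abel]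
  simp only [map_add, map_mul, F.S_S, sub_add_cancel, Algebra.smul_def, AlgEquiv.commutes]
  ring

lemma sum_bracket_d_mul_comm (T U : ι) (p q r : R) :
    ∑ w ∈ F.supp q ×ˢ F.supp r, c (U - w.2 + w.1) •
        (F.bracket c T p (F.d w.2 r) * F.S U (F.d w.1 q)) =
      ∑ w ∈ F.supp p ×ˢ F.supp r, c (T - w.2 + w.1) •
        (F.bracket c U q (F.d w.2 r) * F.S T (F.d w.1 p)) := by
  have expand : ∀ (T : ι) (p : R) (b : ι), F.bracket c T p (F.d b r) =
      ∑ z ∈ F.supp p ×ˢ F.supp r, c (T - z.2 + z.1) •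
        (F.d z.2 (F.d b r) * F.S T (F.d z.1 p)) :=
    fun T p b => bracket_eq_sum le_rfl (F.supp_d b r)
  simp only [expand, Finset.sum_mul, Finset.smul_sum]
  rw [Finset.sum_comm]
  refine Finset.sum_congr rfl fun z _ => Finset.sum_congr rfl fun w _ => ?_
  rw [F.d_comm z.2]
  simp only [Algebra.smul_def]
  ring

lemma sum_d_mul_S_bracket (T U : ι) (p q r : R) :
    ∑ w ∈ F.supp q ×ˢ F.supp r, c (U - w.2 + w.1) •
        (F.d w.2 r * F.S U (F.bracket c (T - U) p (F.d w.1 q))) =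
      ∑ z ∈ F.supp p ×ˢ F.supp q, c (T - U - z.2 + z.1) •
        (F.bracket c U (F.d z.2 q) r * F.S T (F.d z.1 p)) := by
  simp only [bracket_eq_sum le_rfl (F.supp_d _ q), bracket_eq_sum (F.supp_d _ q) le_rfl,
    Finset.sum_mul, Finset.smul_sum, Finset.mul_sum, map_sum]
  rw [Finset.sum_comm]
  refine Finset.sum_congr rfl fun z _ => Finset.sum_congr rfl fun w _ => ?_
  rw [F.d_comm z.2]
  simp only [map_mul, F.S_S, sub_add_cancel, Algebra.smul_def, AlgEquiv.commutes]
  ring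

lemma sum_d_mul_S_bracket_swap (hc : ∀ K, c (-K) = -c K) (T U : ι) (p q r : R) :
    ∑ w ∈ F.supp p ×ˢ F.supp r, c (T - w.2 + w.1) •
        (F.d w.2 r * F.S T (F.bracket c (U - T) q (F.d w.1 p))) =
      -∑ z ∈ F.supp p ×ˢ F.supp q, c (T - U - z.2 + z.1) •
        (F.S U (F.d z.2 q) * F.bracket c T (F.d z.1 p) r) := by
  simp only [← neg_sub T U, bracket_swap hc (-(T - U)), neg_neg,
    bracket_eq_sum (F.supp_d _ p) le_rfl, Finset.smul_sum, Finset.mul_sum, map_sum, map_neg,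
    ← Finset.sum_neg_distrib]
  rw [Finset.sum_comm]
  refine Finset.sum_congr rfl fun z _ => Finset.sum_congr rfl fun w _ => ?_
  have hU : -(T - U) + T = U := by abel
  have hT : T - U + -(T - U) + T = T := by abel
  rw [F.d_comm z.1]
  simp only [map_mul, F.S_S, hU, hT, Algebra.smul_def, AlgEquiv.commutes]
  ring

theorem bracket_jacobi (hc : ∀ K, c (-K) = -c K) (T U : ι) (p q r : R) :
    F.bracket c T p (F.bracket c U q r) - F.bracket c U q (F.bracket c T p r) =
      F.bracket c U (F.bracket c (T - U) p q) r := by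
  simp only [bracket_bracket_right, bracket_bracket_left hc, smul_add, Finset.sum_add_distrib,
    sum_bracket_d_mul_comm T U, sum_d_mul_S_bracket T U, sum_d_mul_S_bracket_swap hc T U]
  abel

end LatticeFrame

lemma pderiv_pderiv_comm {σ R : Type*} [CommRing R] (i j : σ) (p : MvPolynomial σ R) :
    pderiv i (pderiv j p) = pderiv j (pderiv i p) := by
  have h : ⁅pderiv (R := R) i, pderiv (R := R) j⁆ = 0 := by
    refine derivation_ext fun k => ?_
    classical
    simp only [Derivation.commutator_apply, pderiv_X, Pi.single_apply, Derivation.zero_apply]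
    split_ifs <;> simp
  simpa [Derivation.commutator_apply, sub_eq_zero] using DFunLike.congr_fun h p

lemma Sh_Sh (M N : Fin D → ℤ) (p : A ℓ D) : Sh M (Sh N p) = Sh (N + M) p := by
  simp only [Sh, renameEquiv_apply, rename_rename]
  congr 1
  ext ⟨i, K⟩ : 1
  simp [add_assoc]

lemma Sh_C (M : Fin D → ℤ) (a : ℂ) : Sh M (C a : A ℓ D) = C a :=
  (Sh M).commutes a

lemma pderiv_Sh (i : Fin ℓ) (N M : Fin D → ℤ) (p : A ℓ D) :
    pderiv (i, N) (Sh M p) = Sh M (pderiv (i, N - M) p) := by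
  simpa [Sh] using pderiv_rename (((Equiv.refl (Fin ℓ)).prodCongr (Equiv.addRight M))).injective
    (i, N - M) p

noncomputable def shiftFrame (f : A 1 D)
    (hf : ∀ N : Fin D → ℤ, N ≠ 0 → pderiv ((0 : Fin 1), N) f = 0) :
    LatticeFrame ℂ (A 1 D) (Fin D → ℤ) where
  S := Sh
  d N := Sh N f • pderiv ((0 : Fin 1), N)
  S_S := Sh_Sh
  S_d T M x := by
    simp only [Derivation.smul_apply, smul_eq_mul, map_mul, Sh_Sh, pderiv_Sh, add_sub_cancel_right]
  d_comm M N x := by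
    rcases eq_or_ne M N with rfl | hMN
    · rfl
    have hf' : ∀ M N : Fin D → ℤ, M ≠ N → pderiv ((0 : Fin 1), M) (Sh N f) = 0 := fun M N h => by
      rw [pderiv_Sh, hf _ (sub_ne_zero.2 h), map_zero]
    simp only [Derivation.smul_apply, smul_eq_mul, Derivation.leibniz, hf' M N hMN,
      hf' N M hMN.symm, pderiv_pderiv_comm ((0 : Fin 1), M)]
    ring
  finite_support x := by
    refine (x.vars.finite_toSet.preimage (f := fun N => ((0 : Fin 1), N))
      fun a _ b _ h => by simpa using h).subset fun N hN => ?_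
    by_contra h
    exact hN (by simp [pderiv_eq_zero_of_notMem_vars h])

lemma B_eq_bracket (f : A 1 D) (hf : ∀ N : Fin D → ℤ, N ≠ 0 → pderiv ((0 : Fin 1), N) f = 0)
    (c : (Fin D → ℤ) → ℂ) :
    B (fun _ _ K => C (c K) * (f * Sh K f)) = (shiftFrame f hf).bracket c := by
  funext T p q
  rw [B, finsum_unique, finsum_unique]
  refine finsum_congr fun M => finsum_congr fun N => ?_
  simp only [shiftFrame, Derivation.smul_apply, smul_eq_mul, map_mul, Sh_C, Sh_Sh,
    Fin.default_eq_zero]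
  rw [show T - N + M + N = M + T by abel]
  simp only [Algebra.smul_def, MvPolynomial.algebraMap_eq]
  ring

def antisymmetrize {ι k : Type*} [Neg ι] [Sub k] (c : ι → k) (K : ι) : k := c K - c (-K)

lemma antisymmetrize_neg {ι k : Type*} [InvolutiveNeg ι] [AddGroup k] (c : ι → k) (K : ι) :
    antisymmetrize c (-K) = -antisymmetrize c K := by
  simp [antisymmetrize]

lemma neg_v (m n : ℤ) : -v m n = v (-m) (-n) := by
  ext i; fin_cases i <;> rfl

lemma v_inj {m n m' n' : ℤ} : v m n = v m' n' ↔ m = m' ∧ n = n' := by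
  simp [v, funext_iff, Fin.forall_fin_two]

def secondOrderCoeff (α β γ δ ε : ℂ) (K : Fin 2 → ℤ) : ℂ :=
  if K = v 2 0 then α else if K = v 1 1 then β else if K = v 0 2 then γ
  else if K = v 1 0 then δ else if K = v 0 1 then ε else 0

lemma secondOrder_eq_antisymmetrize (α β γ δ ε : ℂ) (f : A 1 2) :
    (fun (_ _ : Fin 1) (T : Fin 2 → ℤ) =>
      if T = v 2 0 then C α * (f * Sh (v 2 0) f)
      else if T = v 1 1 then C β * (f * Sh (v 1 1) f)
      else if T = v 0 2 then C γ * (f * Sh (v 0 2) f)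
      else if T = v 1 0 then C δ * (f * Sh (v 1 0) f)
      else if T = v 0 1 then C ε * (f * Sh (v 0 1) f)
      else if T = v (-2) 0 then -(C α * (f * Sh (v (-2) 0) f))
      else if T = v (-1) (-1) then -(C β * (f * Sh (v (-1) (-1)) f))
      else if T = v 0 (-2) then -(C γ * (f * Sh (v 0 (-2)) f))
      else if T = v (-1) 0 then -(C δ * (f * Sh (v (-1) 0) f))
      else if T = v 0 (-1) then -(C ε * (f * Sh (v 0 (-1)) f))
      else 0) =
    fun _ _ K => C (antisymmetrize (secondOrderCoeff α β γ δ ε) K) * (f * Sh K f) := by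
  funext _ _ K
  repeat' split
  all_goals simp [*, antisymmetrize, secondOrderCoeff, neg_eq_iff_eq_neg, neg_v, v_inj]

/-- for `f = f(u)` and constants `α, β, γ, δ, ε ∈ ℂ`, the operator
`P = f(u)(α S₁² + β S₁S₂ + γ S₂² + δ S₁ + ε S₂ − α S₁^{−2} − β S₁^{−1}S₂^{−1} − γ S₂^{−2}
− δ S₁^{−1} − ε S₂^{−1})∘f(u)` is Hamiltonian: its master-formula λ-bracket is
skewsymmetric and satisfies the PVA-Jacobi identity for all triples. -/
theorem second_order_general_is_hamiltonian (f : A 1 2)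
    (hfdep : ∀ N : Fin 2 → ℤ, N ≠ 0 → pderiv ((0 : Fin 1), N) f = 0)
    (α β γ δ ε : ℂ)
    (P : Fin 1 → Fin 1 → (Fin 2 → ℤ) → A 1 2)
    (hP : P = fun _ _ T =>
      if T = v 2 0 then C α * (f * Sh (v 2 0) f)
      else if T = v 1 1 then C β * (f * Sh (v 1 1) f)
      else if T = v 0 2 then C γ * (f * Sh (v 0 2) f)
      else if T = v 1 0 then C δ * (f * Sh (v 1 0) f)
      else if T = v 0 1 then C ε * (f * Sh (v 0 1) f)
      else if T = v (-2) 0 then -(C α * (f * Sh (v (-2) 0) f))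
      else if T = v (-1) (-1) then -(C β * (f * Sh (v (-1) (-1)) f))
      else if T = v 0 (-2) then -(C γ * (f * Sh (v 0 (-2)) f))
      else if T = v (-1) 0 then -(C δ * (f * Sh (v (-1) 0) f))
      else if T = v 0 (-1) then -(C ε * (f * Sh (v 0 (-1)) f))
      else 0) :
    (∀ (p q : A 1 2) (T : Fin 2 → ℤ), B P (-T) q p = - Sh (-T) (B P T p q)) ∧
    (∀ p q r : A 1 2, Jacobi P p q r) := by
  have hc := antisymmetrize_neg (secondOrderCoeff α β γ δ ε)
  have hB : B P = (shiftFrame f hfdep).bracket (antisymmetrize (secondOrderCoeff α β γ δ ε)) := by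
    rw [hP, secondOrder_eq_antisymmetrize, B_eq_bracket]
  simp only [Jacobi, hB]
  exact ⟨fun p q T => (shiftFrame f hfdep).bracket_skew hc T p q,
    fun p q r T U => (shiftFrame f hfdep).bracket_jacobi hc T U p q r⟩

end MPVA
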